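/- Let 0 < a < b with ab = rs and let u : ℝ² → ℝ be differentiable at every point of the annulus A_p(a,b). Then the Dirichlet energy is invariant under composition with the Kelvin transform: ∫_{A_p(a,b)} ‖D(u∘K)(x)‖² dx = ∫_{A_p(a,b)} ‖Du(x)‖² dx, where ‖·‖ is the operator norm of the Fréchet derivative and both integrals are taken in [0, ∞]. -/

import Mathlib

/-!
The derivative of the inversion `x ↦ c + (R / ‖x - c‖)² • (x - c)` at `x ≠ c` is `λ² • ρ`
with `λ = R / ‖x - c‖` and `ρ` a reflection. Composing with it therefore multiplies `‖Du‖`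
by `λ²`, while its Jacobian determinant is `λ²ⁿ` in dimension `n`. For `n = 2` the factors
agree, so the change of variables formula turns the Dirichlet energy of `u ∘ K` over `s`
into that of `u` over `K '' s`. The Kelvin transform is the inversion of radius `√(r s)`,
which maps `A_p(a, b)` onto itself when `a b = r s`.
-/

open MeasureTheory
open scoped ENNReal NNReal

/-- The Kelvin transform centered at `p` with parameter `r * s`. -/
noncomputable def kelvin (p : EuclideanSpace ℝ (Fin 2)) (r s : ℝ)
    (x : EuclideanSpace ℝ (Fin 2)) : EuclideanSpace ℝ (Fin 2) :=
  p + (r * s / ‖x - p‖ ^ 2) • (x - p)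

/-- The open annulus of radii `a < b` centered at `p`. -/
def annulus (p : EuclideanSpace ℝ (Fin 2)) (a b : ℝ) :
    Set (EuclideanSpace ℝ (Fin 2)) :=
  {x | a < ‖x - p‖ ∧ ‖x - p‖ < b}

open EuclideanGeometry Module Set

section Inversion

variable {E F : Type*} [NormedAddCommGroup E] [InnerProductSpace ℝ E]
  [NormedAddCommGroup F] [NormedSpace ℝ F] {c x : E} {R : ℝ}

theorem abs_det_smul_reflection [FiniteDimensional ℝ E] (a : ℝ) (K : Submodule ℝ E)
    [K.HasOrthogonalProjection] :
    |(a • (K.reflection : E →L[ℝ] E)).det| = |a| ^ finrank ℝ E := by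
  rw [ContinuousLinearMap.det, ContinuousLinearMap.toLinearMap_smul, LinearMap.det_smul,
    abs_mul, abs_pow,
    show ((K.reflection : E →L[ℝ] E) : E →ₗ[ℝ] E) = K.reflection.toLinearMap from rfl,
    K.det_reflection]
  simp

theorem norm_fderiv_comp_inversion (u : E → F) (hR : R ≠ 0) (hx : x ≠ c) :
    ‖fderiv ℝ (u ∘ inversion c R) x‖ =
      (R / dist x c) ^ 2 * ‖fderiv ℝ u (inversion c R x)‖ := by
  by_cases hu : DifferentiableAt ℝ u (inversion c R x)
  · rw [(hu.hasFDerivAt.comp x (hasFDerivAt_inversion hx)).fderiv,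
      ContinuousLinearMap.comp_smul, norm_smul, Real.norm_of_nonneg (by positivity),
      ContinuousLinearMap.opNorm_comp_linearIsometryEquiv]
  · -- `u = (u ∘ inversion c R) ∘ inversion c R`, so both derivatives vanish
    have huK : ¬DifferentiableAt ℝ (u ∘ inversion c R) x := by
      intro h
      rw [← inversion_inversion c hR x] at h
      have hKx : inversion c R x ≠ c := (inversion_eq_center hR).not.2 hx
      have hcomp := h.comp _ (hasFDerivAt_inversion hKx).differentiableAt
      rw [Function.comp_assoc, (inversion_involutive c hR).comp_self, Function.comp_id] at hcomp
      exact hu hcomp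
    simp [fderiv_zero_of_not_differentiableAt hu, fderiv_zero_of_not_differentiableAt huK]

theorem lintegral_nnnorm_fderiv_comp_inversion_sq [FiniteDimensional ℝ E] [MeasurableSpace E]
    [BorelSpace E] (hE : finrank ℝ E = 2) (μ : Measure E) [μ.IsAddHaarMeasure] (u : E → F)
    {s : Set E} (hs : MeasurableSet s) (hc : c ∉ s) (hR : R ≠ 0) :
    ∫⁻ x in s, (‖fderiv ℝ (u ∘ inversion c R) x‖₊ : ℝ≥0∞) ^ 2 ∂μ =
      ∫⁻ y in inversion c R '' s, (‖fderiv ℝ u y‖₊ : ℝ≥0∞) ^ 2 ∂μ := by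
  have hne : ∀ x ∈ s, x ≠ c := fun x hx => ne_of_mem_of_not_mem hx hc
  rw [lintegral_image_eq_lintegral_abs_det_fderiv_mul μ hs
    (fun x hx => (hasFDerivAt_inversion (hne x hx)).hasFDerivWithinAt)
    (inversion_injective c hR).injOn]
  refine setLIntegral_congr_fun hs fun x hx => ?_
  rw [abs_det_smul_reflection, hE, ← enorm_eq_nnnorm, ← enorm_eq_nnnorm, ← ofReal_norm,
    ← ofReal_norm, norm_fderiv_comp_inversion u hR (hne x hx),
    ← ENNReal.ofReal_pow (by positivity), ← ENNReal.ofReal_pow (by positivity),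
    ← ENNReal.ofReal_mul (by positivity)]
  congr 1
  rw [abs_of_nonneg (by positivity)]
  ring

end Inversion

section Annulus

variable {p : EuclideanSpace ℝ (Fin 2)} {a b R : ℝ}

theorem measurableSet_annulus : MeasurableSet (annulus p a b) := by
  have hd : Measurable fun x : EuclideanSpace ℝ (Fin 2) => ‖x - p‖ := by fun_prop
  exact (measurableSet_lt measurable_const hd).inter (measurableSet_lt hd measurable_const)

theorem center_notMem_annulus (ha : 0 ≤ a) : p ∉ annulus p a b := by
  simp [annulus, ha.not_gt]

theorem inversion_mapsTo_annulus (ha : 0 < a) (hb : 0 < b) (hR : R ^ 2 = a * b) :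
    MapsTo (inversion p R) (annulus p a b) (annulus p a b) := by
  rintro x ⟨hax, hxb⟩
  have hx : 0 < ‖x - p‖ := ha.trans hax
  have hdist : ‖inversion p R x - p‖ = a * b / ‖x - p‖ := by
    rw [← dist_eq_norm, dist_inversion_center, hR, dist_eq_norm]
  constructor
  · rw [hdist, lt_div_iff₀ hx]; nlinarith
  · rw [hdist, div_lt_iff₀ hx]; nlinarith

theorem inversion_image_annulus (ha : 0 < a) (hb : 0 < b) (hR : R ^ 2 = a * b) :
    inversion p R '' annulus p a b = annulus p a b := by
  have hR0 : R ≠ 0 := by rintro rfl; nlinarith [mul_pos ha hb]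
  have hmaps := inversion_mapsTo_annulus (p := p) ha hb hR
  exact hmaps.image_subset.antisymm fun x hx => ⟨_, hmaps hx, inversion_inversion p hR0 x⟩

end Annulus

theorem kelvin_eq_inversion (p : EuclideanSpace ℝ (Fin 2)) {r s : ℝ} (hrs : 0 ≤ r * s) :
    kelvin p r s = inversion p √(r * s) := by
  funext x
  simp only [kelvin, inversion_def, vsub_eq_sub, vadd_eq_add, div_pow, Real.sq_sqrt hrs,
    dist_eq_norm, add_comm]

theorem kelvin_dirichlet_invariance_general (p : EuclideanSpace ℝ (Fin 2)) (r s a b : ℝ)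
    (ha : 0 < a) (hab : a < b) (habrs : a * b = r * s)
    (u : EuclideanSpace ℝ (Fin 2) → ℝ) :
    ∫⁻ x in annulus p a b, (‖fderiv ℝ (u ∘ kelvin p r s) x‖₊ : ℝ≥0∞) ^ 2 =
      ∫⁻ x in annulus p a b, (‖fderiv ℝ u x‖₊ : ℝ≥0∞) ^ 2 := by
  have hb : 0 < b := ha.trans hab
  have hrs : 0 < r * s := habrs ▸ mul_pos ha hb
  have hR : √(r * s) ^ 2 = a * b := by rw [Real.sq_sqrt hrs.le, habrs]
  rw [kelvin_eq_inversion p hrs.le,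
    lintegral_nnnorm_fderiv_comp_inversion_sq finrank_euclideanSpace_fin volume u
      measurableSet_annulus (center_notMem_annulus ha.le) (Real.sqrt_pos.2 hrs).ne',
    inversion_image_annulus ha hb hR]

theorem kelvin_dirichlet_invariance (p : EuclideanSpace ℝ (Fin 2)) (r s a b : ℝ)
    (hr : 0 < r) (hs : 0 < s) (ha : 0 < a) (hab : a < b) (habrs : a * b = r * s)
    (u : EuclideanSpace ℝ (Fin 2) → ℝ)
    (hu : ∀ x ∈ annulus p a b, DifferentiableAt ℝ u x) :
    ∫⁻ x in annulus p a b, (‖fderiv ℝ (u ∘ kelvin p r s) x‖₊ : ℝ≥0∞) ^ 2 =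
      ∫⁻ x in annulus p a b, (‖fderiv ℝ u x‖₊ : ℝ≥0∞) ^ 2 :=
  kelvin_dirichlet_invariance_general p r s a b ha hab habrs u
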